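/- For all natural numbers n ≥ 1 and all j with 0 ≤ j ≤ n−1, the following identity holds in ℚ: Σ_{k=j+1}^{n} ((−1)^{k−j+1}/(k−j)) · Sur(n,k) = n · Sur(n−1,j), where Sur(n,k) = Σ_{i=0}^{k} (−1)^i C(k,i) (k−i)^n. (Equivalently, with S(n,k) the Stirling numbers of the second kind and Sur(n,k) = k!·S(n,k), this is the intertwining identity Σ_{k=j+1}^{n} (−1)^{k−j+1} k! S(n,k)/(k−j) = n · j! · S(n−1,j).) -/

import Mathlib

/-- `Sur n k` is the number of surjections from an `n`-set onto a `k`-set,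
`Sur n k = ∑_{i=0}^{k} (-1)^i C(k,i) (k-i)^n`, viewed in `ℚ`. -/
noncomputable def Sur (n k : ℕ) : ℚ :=
  ∑ i ∈ Finset.range (k + 1), (-1 : ℚ) ^ i * (k.choose i : ℚ) * ((k - i : ℕ) : ℚ) ^ n

/-!
`Sur n k` is the `k`-th forward difference of `x ↦ x ^ n` at `0`. Since
`Δ^[k+1] (x * f x) 0 = (k + 1) * Δ^[k] f 1` and `Δ^[k] f 1 = Δ^[k] f 0 + Δ^[k+1] f 0`, this gives
`Sur (n+1) (k+1) = (k+1) * (Sur n k + Sur n (k+1))`, and `Sur n k = 0` for `k > n`.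

Substituting the recurrence into the left side, the weight `(-1)^t / (t+1) * (j+t+1)` splits as
`(-1)^t + j * (-1)^t / (t+1)`: the first part telescopes to `Sur n j`, the second is `j` times two
instances of the identity at `n`, and the recurrence once more closes the induction on `n`.
Conceptually, the identity is `log (1 + Δ) = d/dx` applied to `Δ^[j] (x ↦ x ^ n)` at `0`.
-/

open Finset fwdDiff

theorem fwdDiff_iter_succ_id_mul_zero {R : Type*} [CommRing R] (f : R → R) (k : ℕ) :
    Δ_[1] ^[k + 1] (fun x ↦ x * f x) 0 = (k + 1) * Δ_[1] ^[k] f 1 := by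
  rw [fwdDiff_iter_eq_sum_shift, fwdDiff_iter_eq_sum_shift, sum_range_succ', mul_sum]
  simp only [zero_add, nsmul_eq_mul, mul_one, Nat.cast_zero, zero_mul, smul_zero, add_zero,
    zsmul_eq_mul]
  refine sum_congr rfl fun m _ ↦ ?_
  have hchoose : ((k + 1 : ℕ) : R) * k.choose m = (k + 1).choose (m + 1) * (m + 1) := by
    exact_mod_cast congrArg (Nat.cast (R := R)) (Nat.add_one_mul_choose_eq k m)
  push_cast at hchoose ⊢
  rw [add_comm 1 (m : R)]
  linear_combination -((-1 : R) ^ (k - m) * f (m + 1)) * hchoose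

theorem Sur_eq_fwdDiff_iter (n k : ℕ) : Sur n k = Δ_[1] ^[k] (fun x : ℚ ↦ x ^ n) 0 := by
  rw [fwdDiff_iter_eq_sum_shift, Sur, ← sum_range_reflect]
  refine sum_congr rfl fun i hi ↦ ?_
  have hik : i ≤ k := Nat.lt_succ_iff.mp (mem_range.mp hi)
  rw [Nat.add_sub_cancel, Nat.sub_sub_self hik, Nat.choose_symm hik]
  simp

theorem Sur_eq_zero_of_lt {n k : ℕ} (h : n < k) : Sur n k = 0 := by
  rw [Sur_eq_fwdDiff_iter, fwdDiff_iter_pow_eq_zero_of_lt h, Pi.zero_apply]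

theorem Sur_succ_succ (n k : ℕ) : Sur (n + 1) (k + 1) = (k + 1) * (Sur n k + Sur n (k + 1)) := by
  simp only [Sur_eq_fwdDiff_iter, pow_succ', fwdDiff_iter_succ_id_mul_zero,
    Function.iterate_succ_apply' _ k, fwdDiff, zero_add]
  ring

theorem Sur_succ (n k : ℕ) : Sur (n + 1) k = k * (Sur n (k - 1) + Sur n k) := by
  cases k with
  | zero => simp [Sur]
  | succ k => simpa using Sur_succ_succ n k

theorem sum_range_neg_one_pow_mul_add_succ {R : Type*} [CommRing R] (u : ℕ → R) (N : ℕ) :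
    ∑ t ∈ range N, (-1 : R) ^ t * (u t + u (t + 1)) = u 0 - (-1) ^ N * u N := by
  have h := sum_range_sub' (fun t ↦ (-1 : R) ^ t * u t) N
  simp only [pow_zero, one_mul] at h
  rw [← h]
  refine sum_congr rfl fun t _ ↦ ?_
  ring

theorem sum_range_neg_one_pow_div_succ_mul_Sur {n N : ℕ} (hN : n < N) (j : ℕ) :
    ∑ t ∈ range N, (-1 : ℚ) ^ t / (t + 1) * Sur n (j + 1 + t) = n * Sur (n - 1) j := by
  induction n generalizing j with
  | zero =>
    rw [Nat.cast_zero, zero_mul]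
    exact sum_eq_zero fun t _ ↦ by rw [Sur_eq_zero_of_lt (by omega), mul_zero]
  | succ n ih =>
    specialize ih (by omega)
    have hsplit (t : ℕ) : (-1 : ℚ) ^ t / (t + 1) * Sur (n + 1) (j + 1 + t)
        = (-1) ^ t * (Sur n (j + t) + Sur n (j + t + 1))
          + j * ((-1) ^ t / (t + 1) * Sur n (j + t) + (-1) ^ t / (t + 1) * Sur n (j + 1 + t)) := by
      rw [show j + 1 + t = j + t + 1 by ring, Sur_succ_succ]
      push_cast
      field_simp
      ring
    have htele : ∑ t ∈ range N, (-1 : ℚ) ^ t * (Sur n (j + t) + Sur n (j + t + 1)) = Sur n j := by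
      simpa [← add_assoc, Sur_eq_zero_of_lt (show n < j + N by omega)] using
        sum_range_neg_one_pow_mul_add_succ (fun t ↦ Sur n (j + t)) N
    have hprev : (j : ℚ) * ∑ t ∈ range N, (-1 : ℚ) ^ t / (t + 1) * Sur n (j + t)
        = j * (n * Sur (n - 1) (j - 1)) := by
      rcases j with _ | i
      · simp
      · rw [ih i, Nat.add_sub_cancel]
    have hrec : (n : ℚ) * Sur n j = j * (n * Sur (n - 1) (j - 1) + n * Sur (n - 1) j) := by
      rcases n with _ | m
      · simp
      · rw [Sur_succ]
        push_cast
        ring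
    rw [sum_congr rfl fun t _ ↦ hsplit t, sum_add_distrib, ← mul_sum, sum_add_distrib, htele,
      mul_add, hprev, ih]
    push_cast
    linear_combination -hrec

theorem surjection_intertwining (n : ℕ) (j : ℕ) :
    ∑ k ∈ Finset.Icc (j + 1) n, (-1 : ℚ) ^ (k - j + 1) / ((k - j : ℕ) : ℚ) * Sur n k
      = (n : ℚ) * Sur (n - 1) j := by
  set f : ℕ → ℚ := fun k ↦ (-1 : ℚ) ^ (k - j + 1) / ((k - j : ℕ) : ℚ) * Sur n k
  have hshift : ∑ k ∈ Ico (j + 1) (j + 1 + (n + 1)), f k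
      = ∑ t ∈ range (n + 1), (-1 : ℚ) ^ t / (t + 1) * Sur n (j + 1 + t) := by
    rw [sum_Ico_eq_sum_range, Nat.add_sub_cancel_left]
    refine sum_congr rfl fun t _ ↦ ?_
    simp only [f, show j + 1 + t - j = t + 1 by omega, pow_succ]
    push_cast
    ring
  rw [← sum_range_neg_one_pow_div_succ_mul_Sur n.lt_succ_self j, ← hshift]
  refine sum_subset (fun k hk ↦ ?_) (fun k hk hk' ↦ ?_)
  · simp only [mem_Icc, mem_Ico] at hk ⊢
    omega
  · simp only [mem_Icc, mem_Ico] at hk hk'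
    rw [Sur_eq_zero_of_lt (by omega), mul_zero]
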